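/- Let m be odd and ℓ ≥ 2. The number of simultaneous-conjugation orbits of non-commuting ℓ-tuples in the dihedral group D_{2m} equals (m^{ℓ−1} − 1)(2^ℓ − 1)/2. -/

import Mathlib

/-!
For odd `m`, every nontrivial element of `D_{2m}` has an abelian centralizer: the rotations for a
nontrivial rotation, `{1, s}` for a reflection `s`. Hence no nontrivial element commutes with all
entries of a non-commuting tuple, conjugation acts freely on these tuples, and the orbits number
`((2m)^ℓ - c) / 2m`, where `c` counts commuting tuples. A commuting tuple either consists of
rotations (`m^ℓ` of them) or contains a reflection `s` and then lies in `{1, s}^ℓ` without being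
the identity tuple (`m (2^ℓ - 1)` of them), and
`(2m)^ℓ - m^ℓ - m (2^ℓ - 1) = m (m^(ℓ-1) - 1) (2^ℓ - 1)`.
-/

/-- Simultaneous conjugation on non-commuting `ℓ`-tuples in a group `G`. -/
def conjRel (G : Type*) [Group G] (ℓ : ℕ)
    (s t : {f : Fin ℓ → G // ¬ ∀ i j, Commute (f i) (f j)}) : Prop :=
  ∃ g : G, ∀ i, t.1 i = g * s.1 i * g⁻¹

-- CT-groups: the centralizer of every nontrivial element is abelian.
def IsCommTransitive (G : Type*) [Group G] : Prop :=
  ∀ g x y : G, g ≠ 1 → Commute x g → Commute g y → Commute x y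

section NonCommuting

variable (G ι : Type*) [Group G]

def nonCommutingTuples : SubMulAction (ConjAct G) (ι → G) where
  carrier := {f | ¬ ∀ i j, Commute (f i) (f j)}
  smul_mem' c f hf hc := hf fun i j => by
    simpa [ConjAct.smul_def, Commute.conj_iff] using hc i j

variable {G ι}

theorem IsCommTransitive.eq_one_of_forall_commute (hG : IsCommTransitive G) {f : ι → G}
    (hf : ¬ ∀ i j, Commute (f i) (f j)) {g : G} (hg : ∀ i, Commute g (f i)) : g = 1 := by
  by_contra hne
  exact hf fun i j => hG g (f i) (f j) hne (hg i).symm (hg j)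

theorem IsCommTransitive.stabilizer_nonCommutingTuples_eq_bot (hG : IsCommTransitive G)
    (f : nonCommutingTuples G ι) : MulAction.stabilizer (ConjAct G) f = ⊥ := by
  refine (Subgroup.eq_bot_iff_forall _).mpr fun c hc => ?_
  have hfix : ∀ i, ConjAct.ofConjAct c * f.1 i * (ConjAct.ofConjAct c)⁻¹ = f.1 i := fun i =>
    congrFun (congrArg Subtype.val (MulAction.mem_stabilizer_iff.mp hc)) i
  simpa using hG.eq_one_of_forall_commute f.2 fun i => mul_inv_eq_iff_eq_mul.mp (hfix i)

def quotConjRelEquivOrbits (ℓ : ℕ) :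
    Quot (conjRel G ℓ) ≃
      MulAction.orbitRel.Quotient (ConjAct G) (nonCommutingTuples G (Fin ℓ)) :=
  Quot.congr (Equiv.subtypeEquivRight fun _ => Iff.rfl) fun s t => by
    rw [MulAction.orbitRel_apply, MulAction.mem_orbit_symm, MulAction.mem_orbit_iff,
      ConjAct.toConjAct.surjective.exists]
    simp only [conjRel, Subtype.ext_iff, funext_iff]
    exact exists_congr fun g => forall_congr' fun i => eq_comm

theorem IsCommTransitive.card_quot_conjRel_mul_card (hG : IsCommTransitive G) (ℓ : ℕ) :
    Nat.card (Quot (conjRel G ℓ)) * Nat.card G =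
      Nat.card {f : Fin ℓ → G // ¬ ∀ i j, Commute (f i) (f j)} := by
  rw [Nat.card_congr (quotConjRelEquivOrbits ℓ),
    ← Nat.card_congr (ConjAct.ofConjAct (G := G)).toEquiv, ← Nat.card_prod]
  exact Nat.card_congr
    (MulAction.selfEquivOrbitsQuotientProd hG.stabilizer_nonCommutingTuples_eq_bot).symm

end NonCommuting

namespace DihedralGroup

open Finset

variable {m : ℕ} {ι : Type*}

theorem commute_r_r (a b : ZMod m) : Commute (r a) (r b) := by
  simp [Commute, SemiconjBy, add_comm]

theorem commute_r_sr_iff (hodd : Odd m) {a b : ZMod m} : Commute (r a) (sr b) ↔ a = 0 := by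
  rw [Commute, SemiconjBy, r_mul_sr, sr_mul_r, sr.injEq, sub_eq_add_neg, add_right_inj,
    neg_eq_iff_add_eq_zero, ZMod.add_self_eq_zero_iff_eq_zero hodd]

theorem commute_sr_sr_iff (hodd : Odd m) {a b : ZMod m} : Commute (sr a) (sr b) ↔ a = b := by
  rw [Commute, SemiconjBy, sr_mul_sr, sr_mul_sr, r.injEq, ← neg_sub, neg_eq_iff_add_eq_zero,
    ZMod.add_self_eq_zero_iff_eq_zero hodd, sub_eq_zero]

theorem commute_sr_iff (hodd : Odd m) {x : DihedralGroup m} {a : ZMod m} :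
    Commute x (sr a) ↔ x = 1 ∨ x = sr a := by
  cases x with
  | r b => simp [commute_r_sr_iff hodd, one_def, -r_zero]
  | sr b => simp [commute_sr_sr_iff hodd, one_def, -r_zero]

theorem commute_r_iff (hodd : Odd m) {x : DihedralGroup m} {a : ZMod m} (ha : a ≠ 0) :
    Commute x (r a) ↔ x ∈ Set.range r := by
  cases x with
  | r b => simp [commute_r_r]
  | sr b => simp [(commute_r_sr_iff hodd).not.mpr ha, Commute.symm_iff]

theorem isCommTransitive (hodd : Odd m) : IsCommTransitive (DihedralGroup m) := by
  rintro (a | a) x y hg hx hy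
  · have ha : a ≠ 0 := by rintro rfl; exact hg r_zero
    obtain ⟨b, rfl⟩ := (commute_r_iff hodd ha).mp hx
    obtain ⟨c, rfl⟩ := (commute_r_iff hodd ha).mp hy.symm
    exact commute_r_r b c
  · rcases (commute_sr_iff hodd).mp hx with rfl | rfl <;>
      rcases (commute_sr_iff hodd).mp hy.symm with rfl | rfl <;> simp

theorem forall_commute_iff (hodd : Odd m) {f : ι → DihedralGroup m} :
    (∀ i j, Commute (f i) (f j)) ↔
      (∀ i, f i ∈ Set.range r) ∨ ∃ a, (∀ i, f i = 1 ∨ f i = sr a) ∧ f ≠ 1 := by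
  constructor
  · intro hf
    by_cases hrot : ∀ i, f i ∈ Set.range r
    · exact .inl hrot
    obtain ⟨i₀, hi₀⟩ := not_forall.mp hrot
    obtain ⟨a, ha⟩ : ∃ a, f i₀ = sr a := by
      cases h : f i₀ with
      | r b => exact absurd ⟨b, h.symm⟩ hi₀
      | sr a => exact ⟨a, rfl⟩
    refine .inr ⟨a, fun i => (commute_sr_iff hodd).mp (ha ▸ hf i i₀), fun h1 => ?_⟩
    simp [h1, one_def, -r_zero] at ha
  · rintro (hrot | ⟨a, hf, -⟩) i j
    · obtain ⟨b, hb⟩ := hrot i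
      obtain ⟨c, hc⟩ := hrot j
      rw [← hb, ← hc]
      exact commute_r_r b c
    · rcases hf i with h | h <;> rcases hf j with h' | h' <;> simp [h, h']

section Tuples

variable [NeZero m] [Fintype ι] [DecidableEq ι]

def rotations : Finset (DihedralGroup m) := univ.map ⟨r, fun _ _ => r.inj⟩

theorem mem_rotations {x : DihedralGroup m} : x ∈ rotations ↔ x ∈ Set.range r := by
  simp only [rotations, mem_map, mem_univ, true_and]
  rfl

theorem card_rotations : #(rotations : Finset (DihedralGroup m)) = m := by
  simp [rotations]

theorem forall_commute_iff_mem (hodd : Odd m) {f : ι → DihedralGroup m} :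
    (∀ i j, Commute (f i) (f j)) ↔
      f ∈ Fintype.piFinset (fun _ => rotations) ∪
        univ.biUnion fun a => Fintype.piFinset (fun _ => {1, sr a}) \ {1} := by
  simp [forall_commute_iff hodd, mem_rotations]

theorem card_commuting_tuples (hodd : Odd m) :
    Nat.card {f : ι → DihedralGroup m // ∀ i j, Commute (f i) (f j)} =
      m ^ Fintype.card ι + m * (2 ^ Fintype.card ι - 1) := by
  have one_ne_sr (a : ZMod m) : 1 ≠ sr a := by simp [one_def, -r_zero]
  rw [Nat.card_congr (Equiv.subtypeEquivRight fun f => forall_commute_iff_mem hodd),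
    Nat.card_eq_finsetCard, card_union_of_disjoint, card_biUnion]
  · simp [card_rotations, card_sdiff, one_ne_sr]
  · intro a _ b _ hab
    refine disjoint_left.mpr fun f hfa hfb => hab ?_
    simp only [mem_sdiff, Fintype.mem_piFinset, mem_insert, mem_singleton] at hfa hfb
    obtain ⟨i, hi⟩ := Function.ne_iff.mp hfa.2
    exact sr.inj (((hfa.1 i).resolve_left hi).symm.trans ((hfb.1 i).resolve_left hi))
  · refine disjoint_left.mpr fun f hrot hf => ?_
    simp only [mem_biUnion, mem_univ, true_and, mem_sdiff, Fintype.mem_piFinset, mem_insert,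
      mem_singleton] at hf
    obtain ⟨a, hf, hne⟩ := hf
    obtain ⟨i, hi⟩ := Function.ne_iff.mp hne
    have hri := mem_rotations.mp (Fintype.mem_piFinset.mp hrot i)
    rw [(hf i).resolve_left hi] at hri
    simp at hri

end Tuples

end DihedralGroup

theorem two_mul_eq_of_add_mul_two_mul_eq {m ℓ N : ℕ} (hm : 0 < m)
    (h : m ^ ℓ + m * (2 ^ ℓ - 1) + N * (2 * m) = (2 * m) ^ ℓ) :
    2 * N = (m ^ (ℓ - 1) - 1) * (2 ^ ℓ - 1) := by
  cases ℓ with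
  | zero => simp_all [hm.ne']
  | succ k =>
    obtain ⟨M, hM⟩ : ∃ M, m ^ k = M + 1 :=
      ⟨m ^ k - 1, (Nat.sub_add_cancel (Nat.one_le_pow _ _ hm)).symm⟩
    obtain ⟨P, hP⟩ : ∃ P, 2 ^ (k + 1) = P + 1 :=
      ⟨2 ^ (k + 1) - 1, (Nat.sub_add_cancel Nat.one_le_two_pow).symm⟩
    rw [mul_pow, pow_succ m, hM, hP, Nat.add_sub_cancel] at h
    rw [Nat.add_sub_cancel, hM, hP, Nat.add_sub_cancel, Nat.add_sub_cancel]
    refine Nat.eq_of_mul_eq_mul_right hm ?_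
    linarith

open DihedralGroup in
theorem card_noncommuting_tuples_orbits_dihedral_odd_general (m : ℕ) (hodd : Odd m)
    (ℓ : ℕ) :
    2 * Nat.card (Quot (conjRel (DihedralGroup m) ℓ)) = (m ^ (ℓ - 1) - 1) * (2 ^ ℓ - 1) := by
  classical
  have : NeZero m := ⟨hodd.pos.ne'⟩
  have hcount := Nat.card_congr
    (Equiv.sumCompl fun f : Fin ℓ → DihedralGroup m => ∀ i j, Commute (f i) (f j))
  rw [Nat.card_sum, card_commuting_tuples hodd, Fintype.card_fin,
    ← (isCommTransitive hodd).card_quot_conjRel_mul_card, Nat.card_fun, nat_card, Nat.card_fin]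
    at hcount
  exact two_mul_eq_of_add_mul_two_mul_eq hodd.pos hcount

/-- For `m` odd and `ℓ ≥ 2`, the number of simultaneous-conjugation orbits of non-commuting
`ℓ`-tuples in the dihedral group `D_{2m}` equals `(m^(ℓ-1) - 1)(2^ℓ - 1)/2`. -/
theorem card_noncommuting_tuples_orbits_dihedral_odd (m : ℕ) (hm : 0 < m) (hodd : Odd m)
    (ℓ : ℕ) (hℓ : 2 ≤ ℓ) :
    2 * Nat.card (Quot (conjRel (DihedralGroup m) ℓ)) = (m ^ (ℓ - 1) - 1) * (2 ^ ℓ - 1) :=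
  card_noncommuting_tuples_orbits_dihedral_odd_general m hodd ℓ
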